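/- For the exponential fading model, the wideband-slope expression of the first user's confidential message simplifies as 2·(E[X])² / ((θ/log_e 2)·Var(X) + E[Y]) = 2 / ((θ/log_e 2)·(1 + 2γ) + 4γ + 2), where X = δ·(z1 − z2)·1{z1 ≥ z2} and Y = δ²·(z1² − z2²)·1{z1 ≥ z2}; in particular the value does not depend on δ. -/

import Mathlib

/-!
Each of `X / δ`, `X ^ 2 / δ ^ 2`, `Y / δ ^ 2` is `excessPoly a b c z₁ z₂`, i.e.
`(z₁ - z₂) (a (z₁ - z₂) + b z₂ + c)` on `{z₂ ≤ z₁}`. Conditionally on `z₂ = y`, the memoryless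
law of `z₁` turns this into `(b y + 2 a + c) e^{-y}`, and averaging over `z₂` (rate `1 / γ`) gives
`(2 a + c) / (1 + γ) + b γ / (1 + γ) ^ 2`. Hence `E[X] = δ / (1 + γ)`,
`E[X ^ 2] = 2 δ ^ 2 / (1 + γ)` and `E[Y] = (4 γ + 2) δ ^ 2 / (1 + γ) ^ 2`, and the common factor
`δ ^ 2 / (1 + γ) ^ 2` cancels.
-/

open MeasureTheory ProbabilityTheory Filter Set Real Topology

section QuadraticTimesExp

variable (p q s : ℝ) {c : ℝ}

lemma tendsto_quadratic_mul_exp_neg_mul_atTop (hc : 0 < c) :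
    Tendsto (fun x => (p * x ^ 2 + q * x + s) * exp (-(c * x))) atTop (𝓝 0) := by
  have h := (Polynomial.tendsto_div_exp_atTop
      (.C (p / c ^ 2) * .X ^ 2 + .C (q / c) * .X + .C s)).comp
    (tendsto_id.const_mul_atTop hc)
  refine h.congr fun x => ?_
  simp only [Function.comp_apply, Polynomial.eval_add, Polynomial.eval_mul, Polynomial.eval_pow,
    Polynomial.eval_C, Polynomial.eval_X, id_eq, exp_neg]
  field_simp

lemma integrableOn_quadratic_mul_exp_neg_mul_Ioi (a : ℝ) (hc : 0 < c) :
    IntegrableOn (fun x => (p * x ^ 2 + q * x + s) * exp (-(c * x))) (Ioi a) := by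
  refine integrable_of_isBigO_exp_neg (half_pos hc) (by fun_prop)
    (Asymptotics.IsLittleO.isBigO ?_)
  rw [Asymptotics.isLittleO_iff_tendsto fun x hx => absurd hx (exp_ne_zero _)]
  -- `exp (-c x) = exp (-c x / 2) ^ 2`: half of the decay beats the polynomial
  refine (tendsto_quadratic_mul_exp_neg_mul_atTop p q s (half_pos hc)).congr fun x => ?_
  rw [eq_div_iff (exp_ne_zero _), mul_assoc, ← exp_add]
  ring_nf

lemma integral_quadratic_mul_exp_neg_mul_Ioi (a : ℝ) (hc : 0 < c) :
    ∫ x in Ioi a, (p * x ^ 2 + q * x + s) * exp (-(c * x))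
      = ((p * a ^ 2 + q * a + s) / c + (2 * p * a + q) / c ^ 2 + 2 * p / c ^ 3)
          * exp (-(c * a)) := by
  have hderiv : ∀ x ∈ Ici a, HasDerivAt
      (fun x => -((p * x ^ 2 + q * x + s) / c + (2 * p * x + q) / c ^ 2 + 2 * p / c ^ 3)
        * exp (-(c * x)))
      ((p * x ^ 2 + q * x + s) * exp (-(c * x))) x := by
    intro x _
    have hP : HasDerivAt (fun x => p * x ^ 2 + q * x + s) (2 * p * x + q) x := by
      refine ((((hasDerivAt_pow 2 x).const_mul p).add
        ((hasDerivAt_id x).const_mul q)).add_const s).congr_deriv ?_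
      push_cast; ring
    have hP' : HasDerivAt (fun x => 2 * p * x + q) (2 * p) x := by
      simpa using ((hasDerivAt_id x).const_mul (2 * p)).add_const q
    have hexp : HasDerivAt (fun x => exp (-(c * x))) (-c * exp (-(c * x))) x := by
      simpa [mul_comm] using ((hasDerivAt_id x).const_mul (-c)).exp
    have hpoly : HasDerivAt
        (fun x => -((p * x ^ 2 + q * x + s) / c + (2 * p * x + q) / c ^ 2 + 2 * p / c ^ 3))
        (-((2 * p * x + q) / c + 2 * p / c ^ 2)) x :=
      (((hP.div_const c).add (hP'.div_const (c ^ 2))).add_const _).neg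
    refine (hpoly.mul hexp).congr_deriv ?_
    field_simp
    ring
  have hlim : Tendsto
      (fun x => -((p * x ^ 2 + q * x + s) / c + (2 * p * x + q) / c ^ 2 + 2 * p / c ^ 3)
        * exp (-(c * x))) atTop (𝓝 0) := by
    refine (tendsto_quadratic_mul_exp_neg_mul_atTop (-(p / c)) (-(q / c) - 2 * p / c ^ 2)
      (-(s / c) - q / c ^ 2 - 2 * p / c ^ 3) hc).congr fun x => ?_
    ring
  rw [integral_Ioi_of_hasDerivAt_of_tendsto' hderiv
    (integrableOn_quadratic_mul_exp_neg_mul_Ioi p q s a hc) hlim]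
  ring

end QuadraticTimesExp

lemma expMeasure_eq_withDensity_restrict_Ici (r : ℝ) :
    expMeasure r
      = (volume.restrict (Ici 0)).withDensity fun x => ENNReal.ofReal (r * exp (-(r * x))) := by
  rw [← withDensity_indicator measurableSet_Ici]
  change volume.withDensity (exponentialPDF r) = _
  congr 1
  ext x
  by_cases hx : 0 ≤ x <;> simp [exponentialPDF_eq, hx]

lemma ae_nonneg_expMeasure (r : ℝ) : ∀ᵐ x ∂expMeasure r, 0 ≤ x := by
  rw [expMeasure_eq_withDensity_restrict_Ici]
  exact (withDensity_absolutelyContinuous _ _).ae_le (ae_restrict_mem measurableSet_Ici)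

section ExpMeasure

variable {r : ℝ}

lemma integral_expMeasure (hr : 0 ≤ r) (g : ℝ → ℝ) :
    ∫ x, g x ∂expMeasure r = ∫ x in Ici 0, g x * (r * exp (-(r * x))) := by
  rw [expMeasure_eq_withDensity_restrict_Ici, integral_withDensity_eq_integral_toReal_smul
    (by fun_prop) (ae_of_all _ fun _ => ENNReal.ofReal_lt_top)]
  refine integral_congr_ae (ae_of_all _ fun x => ?_)
  simp only [ENNReal.toReal_ofReal (by positivity : 0 ≤ r * exp (-(r * x))), smul_eq_mul, mul_comm]

lemma integrable_expMeasure_iff (hr : 0 ≤ r) {g : ℝ → ℝ} :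
    Integrable g (expMeasure r) ↔ IntegrableOn (fun x => g x * (r * exp (-(r * x)))) (Ici 0) := by
  rw [expMeasure_eq_withDensity_restrict_Ici, integrable_withDensity_iff (by fun_prop)
    (ae_of_all _ fun _ => ENNReal.ofReal_lt_top)]
  have hdens (x : ℝ) : (ENNReal.ofReal (r * exp (-(r * x)))).toReal = r * exp (-(r * x)) :=
    ENNReal.toReal_ofReal (by positivity)
  simp only [IntegrableOn, hdens]

lemma linear_mul_exp_neg_mul_exp_neg_mul (β κ x : ℝ) :
    (β * x + κ) * exp (-x) * (r * exp (-(r * x)))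
      = (0 * x ^ 2 + r * β * x + r * κ) * exp (-((1 + r) * x)) := by
  rw [show -((1 + r) * x) = -x + -(r * x) by ring, exp_add]
  ring

lemma integrable_linear_mul_exp_neg_expMeasure (hr : 0 ≤ r) (β κ : ℝ) :
    Integrable (fun x => (β * x + κ) * exp (-x)) (expMeasure r) := by
  rw [integrable_expMeasure_iff hr, integrableOn_Ici_iff_integrableOn_Ioi]
  simpa only [linear_mul_exp_neg_mul_exp_neg_mul] using
    integrableOn_quadratic_mul_exp_neg_mul_Ioi 0 (r * β) (r * κ) 0 (by linarith : 0 < 1 + r)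

lemma integral_linear_mul_exp_neg_expMeasure (hr : 0 ≤ r) (β κ : ℝ) :
    ∫ x, (β * x + κ) * exp (-x) ∂expMeasure r = r * κ / (1 + r) + r * β / (1 + r) ^ 2 := by
  rw [integral_expMeasure hr, integral_Ici_eq_integral_Ioi]
  simp only [linear_mul_exp_neg_mul_exp_neg_mul]
  rw [integral_quadratic_mul_exp_neg_mul_Ioi _ _ _ _ (by linarith : 0 < 1 + r)]
  have hr₁ : 1 + r ≠ 0 := by linarith
  simp only [mul_zero, neg_zero, exp_zero, mul_one]
  field_simp
  ring

end ExpMeasure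

noncomputable def excessPoly (a b c x y : ℝ) : ℝ :=
  if y ≤ x then (x - y) * (a * (x - y) + b * y + c) else 0

lemma excessPoly_nonneg {a b c : ℝ} (ha : 0 ≤ a) (hb : 0 ≤ b) (hc : 0 ≤ c) {y : ℝ} (hy : 0 ≤ y)
    (x : ℝ) : 0 ≤ excessPoly a b c x y := by
  unfold excessPoly
  split_ifs with hxy
  · have : 0 ≤ x - y := sub_nonneg.2 hxy
    positivity
  · rfl

lemma measurable_excessPoly (a b c : ℝ) :
    Measurable fun p : ℝ × ℝ => excessPoly a b c p.1 p.2 :=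
  Measurable.ite (measurableSet_le measurable_snd measurable_fst) (by fun_prop) measurable_const

lemma excessPoly_mul_exp_neg (a b c y x : ℝ) :
    excessPoly a b c x y * (1 * exp (-(1 * x)))
      = (Ici y).indicator (fun x => (a * x ^ 2 + (b * y + c - 2 * a * y) * x
          + (a * y ^ 2 - b * y ^ 2 - c * y)) * exp (-(1 * x))) x := by
  unfold excessPoly
  by_cases hxy : y ≤ x
  · rw [if_pos hxy, indicator_of_mem (mem_Ici.2 hxy)]
    ring
  · rw [if_neg hxy, indicator_of_notMem (by simpa using hxy), zero_mul]

lemma integrable_excessPoly_expMeasure_one (a b c y : ℝ) :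
    Integrable (fun x => excessPoly a b c x y) (expMeasure 1) := by
  rw [integrable_expMeasure_iff zero_le_one]
  simp only [excessPoly_mul_exp_neg]
  refine IntegrableOn.indicator ?_ measurableSet_Ici
  rw [integrableOn_Ici_iff_integrableOn_Ioi]
  exact integrableOn_quadratic_mul_exp_neg_mul_Ioi _ _ _ 0 one_pos

lemma integral_excessPoly_expMeasure_one (a b c : ℝ) {y : ℝ} (hy : 0 ≤ y) :
    ∫ x, excessPoly a b c x y ∂expMeasure 1 = (b * y + (2 * a + c)) * exp (-y) := by
  rw [integral_expMeasure zero_le_one]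
  simp only [excessPoly_mul_exp_neg]
  rw [setIntegral_indicator measurableSet_Ici, Ici_inter_Ici, sup_eq_right.2 hy,
    integral_Ici_eq_integral_Ioi, integral_quadratic_mul_exp_neg_mul_Ioi _ _ _ _ one_pos]
  ring_nf

lemma integral_excessPoly_prod_expMeasure {a b c : ℝ} (ha : 0 ≤ a) (hb : 0 ≤ b) (hc : 0 ≤ c)
    {r : ℝ} (hr : 0 < r) :
    ∫ p, excessPoly a b c p.1 p.2 ∂(expMeasure 1).prod (expMeasure r)
      = r * (2 * a + c) / (1 + r) + r * b / (1 + r) ^ 2 := by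
  have := isProbabilityMeasure_expMeasure one_pos
  have := isProbabilityMeasure_expMeasure hr
  have hinner : ∀ᵐ y ∂expMeasure r,
      ∫ x, excessPoly a b c x y ∂expMeasure 1 = (b * y + (2 * a + c)) * exp (-y) := by
    filter_upwards [ae_nonneg_expMeasure r] with y hy
    exact integral_excessPoly_expMeasure_one a b c hy
  have hint : Integrable (fun p : ℝ × ℝ => excessPoly a b c p.1 p.2)
      ((expMeasure 1).prod (expMeasure r)) := by
    refine (integrable_prod_iff' (measurable_excessPoly a b c).aestronglyMeasurable).2
      ⟨ae_of_all _ fun y => integrable_excessPoly_expMeasure_one a b c y, ?_⟩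
    refine (integrable_linear_mul_exp_neg_expMeasure hr.le b (2 * a + c)).congr ?_
    filter_upwards [ae_nonneg_expMeasure r, hinner] with y hy hy'
    rw [← hy']
    exact integral_congr_ae (ae_of_all _ fun x =>
      (norm_of_nonneg (excessPoly_nonneg ha hb hc hy x)).symm)
  rw [integral_prod_symm _ hint, integral_congr_ae hinner,
    integral_linear_mul_exp_neg_expMeasure hr.le]

lemma integral_excessPoly_of_indepFun {Ω : Type*} [MeasurableSpace Ω] {μ : Measure Ω}
    [IsFiniteMeasure μ] {z₁ z₂ : Ω → ℝ} (hz₁ : AEMeasurable z₁ μ) (hz₂ : AEMeasurable z₂ μ)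
    (hindep : IndepFun z₁ z₂ μ) {r : ℝ} (hr : 0 < r) (hz₁law : μ.map z₁ = expMeasure 1)
    (hz₂law : μ.map z₂ = expMeasure r) {a b c : ℝ} (ha : 0 ≤ a) (hb : 0 ≤ b) (hc : 0 ≤ c) :
    ∫ ω, excessPoly a b c (z₁ ω) (z₂ ω) ∂μ
      = r * (2 * a + c) / (1 + r) + r * b / (1 + r) ^ 2 := by
  have hjoint := hindep.map_prod_eq_prod_map_map hz₁ hz₂
  rw [hz₁law, hz₂law] at hjoint
  rw [← integral_excessPoly_prod_expMeasure ha hb hc hr, ← hjoint,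
    integral_map (hz₁.prodMk hz₂) (measurable_excessPoly a b c).aestronglyMeasurable]

theorem wideband_slope_exponential_fading_user1_general
    {Ω : Type*} [MeasurableSpace Ω] (μ : Measure Ω) [IsProbabilityMeasure μ]
    (z1 z2 : Ω → ℝ) (hz1m : Measurable z1) (hz2m : Measurable z2)
    (hindep : IndepFun z1 z2 μ)
    (γ : ℝ) (hγ : 0 < γ)
    (hz1law : μ.map z1 = expMeasure 1)
    (hz2law : μ.map z2 = expMeasure γ⁻¹)
    (θ δ : ℝ) (hδ0 : 0 < δ)
    (X Y : Ω → ℝ)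
    (hX : ∀ ω, X ω = if z2 ω ≤ z1 ω then δ * (z1 ω - z2 ω) else 0)
    (hY : ∀ ω, Y ω = if z2 ω ≤ z1 ω then δ ^ 2 * ((z1 ω) ^ 2 - (z2 ω) ^ 2) else 0)
    (VarX : ℝ) (hVarX : VarX = (∫ ω, (X ω) ^ 2 ∂μ) - (∫ ω, X ω ∂μ) ^ 2) :
    2 * (∫ ω, X ω ∂μ) ^ 2 / ((θ / Real.log 2) * VarX + ∫ ω, Y ω ∂μ)
      = 2 / ((θ / Real.log 2) * (1 + 2 * γ) + 4 * γ + 2) := by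
  have moment {a b c : ℝ} (ha : 0 ≤ a) (hb : 0 ≤ b) (hc : 0 ≤ c) :
      ∫ ω, excessPoly a b c (z1 ω) (z2 ω) ∂μ = (2 * a + c) / (1 + γ) + b * γ / (1 + γ) ^ 2 := by
    rw [integral_excessPoly_of_indepFun hz1m.aemeasurable hz2m.aemeasurable hindep
      (inv_pos.2 hγ) hz1law hz2law ha hb hc]
    field_simp
    ring
  have hX' : X = fun ω => δ * excessPoly 0 0 1 (z1 ω) (z2 ω) := by
    ext ω; simp only [hX, excessPoly]; split_ifs <;> ring
  have hX2 : (fun ω => X ω ^ 2) = fun ω => δ ^ 2 * excessPoly 1 0 0 (z1 ω) (z2 ω) := by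
    ext ω; simp only [hX, excessPoly]; split_ifs <;> ring
  have hY' : Y = fun ω => δ ^ 2 * excessPoly 1 2 0 (z1 ω) (z2 ω) := by
    ext ω; simp only [hY, excessPoly]; split_ifs <;> ring
  rw [hVarX, hX2, hX', hY', integral_const_mul, integral_const_mul, integral_const_mul,
    moment le_rfl le_rfl zero_le_one, moment zero_le_one le_rfl le_rfl,
    moment zero_le_one zero_le_two le_rfl]
  have hscale : δ ^ 2 / (1 + γ) ^ 2 ≠ 0 := by positivity
  set T := θ / Real.log 2
  calc _ = δ ^ 2 / (1 + γ) ^ 2 * 2 / (δ ^ 2 / (1 + γ) ^ 2 * (T * (1 + 2 * γ) + 4 * γ + 2)) := by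
        congr 1 <;> field_simp <;> ring
    _ = _ := mul_div_mul_left _ _ hscale

/-- For independent exponential fading powers (`z1` with mean 1, `z2`
with mean `γ`), the wideband-slope expression of the first user's confidential message
simplifies as
`2·(E[X])² / ((θ/log 2)·Var(X) + E[Y]) = 2 / ((θ/log 2)·(1 + 2γ) + 4γ + 2)`,
where `X = δ·(z1 − z2)·1{z1 ≥ z2}` and `Y = δ²·(z1² − z2²)·1{z1 ≥ z2}`; in particular
the value does not depend on `δ`. -/
theorem wideband_slope_exponential_fading_user1
    {Ω : Type*} [MeasurableSpace Ω] (μ : Measure Ω) [IsProbabilityMeasure μ]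
    (z1 z2 : Ω → ℝ) (hz1m : Measurable z1) (hz2m : Measurable z2)
    (hindep : IndepFun z1 z2 μ)
    (γ : ℝ) (hγ : 0 < γ)
    (hz1law : μ.map z1 = expMeasure 1)
    (hz2law : μ.map z2 = expMeasure γ⁻¹)
    (θ δ : ℝ) (hθ : 0 < θ) (hδ0 : 0 < δ) (hδ1 : δ ≤ 1)
    (X Y : Ω → ℝ)
    (hX : ∀ ω, X ω = if z2 ω ≤ z1 ω then δ * (z1 ω - z2 ω) else 0)
    (hY : ∀ ω, Y ω = if z2 ω ≤ z1 ω then δ ^ 2 * ((z1 ω) ^ 2 - (z2 ω) ^ 2) else 0)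
    (VarX : ℝ) (hVarX : VarX = (∫ ω, (X ω) ^ 2 ∂μ) - (∫ ω, X ω ∂μ) ^ 2) :
    2 * (∫ ω, X ω ∂μ) ^ 2 / ((θ / Real.log 2) * VarX + ∫ ω, Y ω ∂μ)
      = 2 / ((θ / Real.log 2) * (1 + 2 * γ) + 4 * γ + 2) :=
  wideband_slope_exponential_fading_user1_general μ z1 z2 hz1m hz2m hindep γ hγ hz1law hz2law θ δ
    hδ0 X Y hX hY VarX hVarX
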